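/- Let d, m be natural numbers, let Q = (q_{ij}) : R^d -> R^{d x d} have C^1 entries with symmetric positive semidefinite values, and let V : R^d -> R^{m x m} satisfy <V(x) xi, xi> <= -|xi|^2 for all x in R^d and xi in R^m. Let T > 0 and let u : (0,T) x R^d -> R^m be such that for each k the component u_k has a first partial derivative in t and second partial derivatives in x, and suppose u satisfies the system d/dt u_k = div(Q grad u_k) - u_k + (V u)_k for k = 1, ..., m at every point. Then at every point of (0,T) x R^d one has d/dt |u|^2 <= div(Q grad |u|^2) - 4 |u|^2, where the divergence form operator acts in the x variables. -/

import Mathlib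

/-!
Both sides expand componentwise: `∂ₜ|u|² = ∑ₖ 2uₖ ∂ₜuₖ`, and the product rule gives
`div(Q∇uₖ²) = 2uₖ div(Q∇uₖ) + 2⟨Q∇uₖ, ∇uₖ⟩`. After substituting the equation the second-order
terms cancel, leaving
`∂ₜ|u|² - div(Q∇|u|²) + 4|u|² = 2(|u|² + ⟨Vu, u⟩) - 2 ∑ₖ ⟨Q∇uₖ, ∇uₖ⟩ ≤ 0`
by the bound on `V` and the positive semidefiniteness of `Q`.
-/

open Set Matrix

noncomputable def pd {d : ℕ} (i : Fin d) (f : (Fin d → ℝ) → ℝ) (x : Fin d → ℝ) : ℝ :=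
  fderiv ℝ f x (Pi.single i 1)

/-- `div (Q ∇ f) = ∑ i j, D_i (q_{ij} D_j f)`. -/
noncomputable def divQgrad {d : ℕ} (q : Fin d → Fin d → (Fin d → ℝ) → ℝ)
    (f : (Fin d → ℝ) → ℝ) (x : Fin d → ℝ) : ℝ :=
  ∑ i, ∑ j, pd i (fun y => q i j y * pd j f y) x

section PartialDerivatives

variable {d : ℕ} {x : Fin d → ℝ}

lemma pd_add {f g : (Fin d → ℝ) → ℝ} (hf : DifferentiableAt ℝ f x)
    (hg : DifferentiableAt ℝ g x) (i : Fin d) :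
    pd i (fun y => f y + g y) x = pd i f x + pd i g x := by
  simp [pd, fderiv_fun_add hf hg]

lemma pd_mul {f g : (Fin d → ℝ) → ℝ} (hf : DifferentiableAt ℝ f x)
    (hg : DifferentiableAt ℝ g x) (i : Fin d) :
    pd i (fun y => f y * g y) x = pd i f x * g x + f x * pd i g x := by
  simp only [pd, fderiv_fun_mul hf hg, _root_.add_apply, _root_.smul_apply, smul_eq_mul]
  ring

lemma pd_sum {ι : Type*} (s : Finset ι) {f : ι → (Fin d → ℝ) → ℝ}
    (hf : ∀ k ∈ s, DifferentiableAt ℝ (f k) x) (i : Fin d) :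
    pd i (fun y => ∑ k ∈ s, f k y) x = ∑ k ∈ s, pd i (f k) x := by
  simp [pd, fderiv_fun_sum hf]

lemma contDiff_pd {n : WithTop ℕ∞} {f : (Fin d → ℝ) → ℝ} (hf : ContDiff ℝ (n + 1) f)
    (j : Fin d) : ContDiff ℝ n (pd j f) :=
  (hf.fderiv_right le_rfl).clm_apply contDiff_const

lemma differentiable_pd {f : (Fin d → ℝ) → ℝ} (hf : ContDiff ℝ 2 f) (j : Fin d) :
    Differentiable ℝ (pd j f) :=
  (contDiff_pd (n := 1) hf j).differentiable one_ne_zero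

end PartialDerivatives

section DivergenceForm

variable {d : ℕ} {q : Fin d → Fin d → (Fin d → ℝ) → ℝ}

lemma divQgrad_sum (hq : ∀ i j, Differentiable ℝ (q i j)) {ι : Type*} (s : Finset ι)
    {f : ι → (Fin d → ℝ) → ℝ} (hf : ∀ k ∈ s, ContDiff ℝ 2 (f k)) (x : Fin d → ℝ) :
    divQgrad q (fun z => ∑ k ∈ s, f k z) x = ∑ k ∈ s, divQgrad q (f k) x := by
  have hgrad (j : Fin d) : pd j (fun z => ∑ k ∈ s, f k z) = fun y => ∑ k ∈ s, pd j (f k) y :=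
    funext fun y => pd_sum s (fun k hk => ((hf k hk).differentiable two_ne_zero).differentiableAt) j
  have hflux (i j : Fin d) : pd i (fun y => ∑ k ∈ s, q i j y * pd j (f k) y) x
      = ∑ k ∈ s, pd i (fun y => q i j y * pd j (f k) y) x :=
    pd_sum s (fun k hk => ((hq i j).mul (differentiable_pd (hf k hk) j)).differentiableAt) i
  simp only [divQgrad, hgrad, Finset.mul_sum, hflux]
  conv_rhs => rw [Finset.sum_comm]
  exact Finset.sum_congr rfl fun i _ => Finset.sum_comm

lemma divQgrad_mul (hq : ∀ i j, Differentiable ℝ (q i j)) {f g : (Fin d → ℝ) → ℝ}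
    (hf : ContDiff ℝ 2 f) (hg : ContDiff ℝ 2 g) (x : Fin d → ℝ) :
    divQgrad q (fun z => f z * g z) x
      = f x * divQgrad q g x + g x * divQgrad q f x
        + ∑ i, ∑ j, (pd i f x * q i j x * pd j g x + pd i g x * q i j x * pd j f x) := by
  have hf' := hf.differentiable two_ne_zero
  have hg' := hg.differentiable two_ne_zero
  have hpf := differentiable_pd hf
  have hpg := differentiable_pd hg
  have hflux (i j : Fin d) : (fun y => q i j y * pd j (fun z => f z * g z) y)
      = fun y => q i j y * pd j f y * g y + f y * (q i j y * pd j g y) :=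
    funext fun y => by rw [pd_mul (hf' y) (hg' y)]; ring
  simp only [divQgrad, hflux, Finset.mul_sum, ← Finset.sum_add_distrib]
  refine Finset.sum_congr rfl fun i _ => Finset.sum_congr rfl fun j _ => ?_
  have hqij := hq i j
  rw [pd_add (f := fun y => q i j y * pd j f y * g y) (by fun_prop) (by fun_prop),
    pd_mul (f := fun y => q i j y * pd j f y) (g := g) (by fun_prop) (by fun_prop),
    pd_mul (f := f) (g := fun y => q i j y * pd j g y) (by fun_prop) (by fun_prop)]
  ring

lemma divQgrad_sq (hq : ∀ i j, Differentiable ℝ (q i j)) {f : (Fin d → ℝ) → ℝ}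
    (hf : ContDiff ℝ 2 f) (x : Fin d → ℝ) :
    divQgrad q (fun z => f z ^ 2) x
      = 2 * f x * divQgrad q f x + 2 * ∑ i, ∑ j, pd i f x * q i j x * pd j f x := by
  simp only [sq, divQgrad_mul hq hf hf, ← two_mul, Finset.mul_sum]
  ring

end DivergenceForm

lemma deriv_sum_sq {ι : Type*} (s : Finset ι) {f : ι → ℝ → ℝ} {t : ℝ}
    (hf : ∀ k ∈ s, DifferentiableAt ℝ (f k) t) :
    deriv (fun τ => ∑ k ∈ s, f k τ ^ 2) t = ∑ k ∈ s, 2 * f k t * deriv (f k) t := by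
  rw [deriv_fun_sum (A := fun k τ => f k τ ^ 2) fun k hk => (hf k hk).pow 2]
  refine Finset.sum_congr rfl fun k hk => ?_
  rw [deriv_fun_pow (hf k hk) 2]
  ring

theorem parabolic_inequality_for_square_general (d m : ℕ)
    (q : Fin d → Fin d → (Fin d → ℝ) → ℝ) (hq : ∀ i j, ContDiff ℝ 1 (q i j))
    (hpsd : ∀ (x : Fin d → ℝ) (ξ : Fin d → ℝ), 0 ≤ ∑ i, ∑ j, ξ i * q i j x * ξ j)
    (V : (Fin d → ℝ) → Matrix (Fin m) (Fin m) ℝ)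
    (hV : ∀ (x : Fin d → ℝ) (ξ : Fin m → ℝ), (V x).mulVec ξ ⬝ᵥ ξ ≤ -(ξ ⬝ᵥ ξ))
    (T : ℝ)
    (u : Fin m → ℝ → (Fin d → ℝ) → ℝ)
    (hut : ∀ k (t : ℝ), t ∈ Ioo 0 T → ∀ x, DifferentiableAt ℝ (fun s => u k s x) t)
    (hux : ∀ k (t : ℝ), t ∈ Ioo 0 T → ContDiff ℝ 2 (u k t))
    (hpde : ∀ k (t : ℝ), t ∈ Ioo 0 T → ∀ x,
      deriv (fun s => u k s x) t
        = divQgrad q (u k t) x - u k t x + (V x).mulVec (fun l => u l t x) k) :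
    ∀ (t : ℝ), t ∈ Ioo 0 T → ∀ x,
      deriv (fun s => ∑ k, u k s x ^ 2) t
        ≤ divQgrad q (fun z => ∑ k, u k t z ^ 2) x - 4 * ∑ k, u k t x ^ 2 := by
  intro t ht x
  have hqd (i j : Fin d) : Differentiable ℝ (q i j) := (hq i j).differentiable one_ne_zero
  have hgrad : 0 ≤ ∑ k, ∑ i, ∑ j, pd i (u k t) x * q i j x * pd j (u k t) x :=
    Finset.sum_nonneg fun k _ => hpsd x fun i => pd i (u k t) x
  have hpot := hV x fun l => u l t x
  rw [deriv_sum_sq _ fun k _ => hut k t ht x,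
    divQgrad_sum hqd _ (fun k _ => (hux k t ht).pow 2) x]
  rw [dotProduct_comm] at hpot
  simp only [divQgrad_sq hqd (hux _ t ht), hpde _ t ht, dotProduct, mul_add, mul_sub, mul_assoc,
    Finset.sum_add_distrib, Finset.sum_sub_distrib, ← Finset.mul_sum, ← sq] at hpot hgrad ⊢
  linarith

/-- If `u` solves `∂ₜ uₖ = div(Q ∇ uₖ) - uₖ + (Vu)ₖ` on `(0,T) × ℝ^d`, with `Q(x)` symmetric
positive semidefinite and `⟨V(x)ξ, ξ⟩ ≤ -|ξ|²`, then `∂ₜ |u|² ≤ div(Q ∇ |u|²) - 4|u|²`. -/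
theorem parabolic_inequality_for_square (d m : ℕ)
    (q : Fin d → Fin d → (Fin d → ℝ) → ℝ) (hq : ∀ i j, ContDiff ℝ 1 (q i j))
    (hsymm : ∀ i j x, q i j x = q j i x)
    (hpsd : ∀ (x : Fin d → ℝ) (ξ : Fin d → ℝ), 0 ≤ ∑ i, ∑ j, ξ i * q i j x * ξ j)
    (V : (Fin d → ℝ) → Matrix (Fin m) (Fin m) ℝ)
    (hV : ∀ (x : Fin d → ℝ) (ξ : Fin m → ℝ), (V x).mulVec ξ ⬝ᵥ ξ ≤ -(ξ ⬝ᵥ ξ))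
    (T : ℝ) (hT : 0 < T)
    (u : Fin m → ℝ → (Fin d → ℝ) → ℝ)
    (hut : ∀ k (t : ℝ), t ∈ Ioo 0 T → ∀ x, DifferentiableAt ℝ (fun s => u k s x) t)
    (hux : ∀ k (t : ℝ), t ∈ Ioo 0 T → ContDiff ℝ 2 (u k t))
    (hpde : ∀ k (t : ℝ), t ∈ Ioo 0 T → ∀ x,
      deriv (fun s => u k s x) t
        = divQgrad q (u k t) x - u k t x + (V x).mulVec (fun l => u l t x) k) :
    ∀ (t : ℝ), t ∈ Ioo 0 T → ∀ x,
      deriv (fun s => ∑ k, u k s x ^ 2) t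
        ≤ divQgrad q (fun z => ∑ k, u k t z ^ 2) x - 4 * ∑ k, u k t x ^ 2 :=
  parabolic_inequality_for_square_general d m q hq hpsd V hV T u hut hux hpde
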